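/- If B ∈ HSP(A) and the natural clone homomorphism from Clo(A) onto Clo(B) is uniformly continuous, then every finitely generated subalgebra of B is a homomorphic image of a subalgebra of a finite power of A. -/

import Mathlib

/-! Basic universal algebra over a signature. -/

structure Sig where
  ops : Type
  ar : ops → ℕ

structure Alg (σ : Sig) where
  carrier : Type
  interp : ∀ o : σ.ops, (Fin (σ.ar o) → carrier) → carrier

/-- Terms over the variables `x₁, …, xₙ` (represented by `Fin n`). -/
inductive Tm (σ : Sig) (n : ℕ) : Type where
  | var : Fin n → Tm σ n
  | app : (o : σ.ops) → (Fin (σ.ar o) → Tm σ n) → Tm σ n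

/-- Evaluation of a term in an algebra (the map `ν^A_n`). -/
def evalTm {σ : Sig} (A : Alg σ) {n : ℕ} : Tm σ n → (Fin n → A.carrier) → A.carrier
  | .var i, a => a i
  | .app o ts, a => A.interp o fun j => evalTm A (ts j) a

/-- The set `Clo_n(A)` of `n`-ary term operations of `A`. -/
def CloSet {σ : Sig} (A : Alg σ) (n : ℕ) : Set ((Fin n → A.carrier) → A.carrier) :=
  Set.range fun t : Tm σ n => evalTm A t

def IsSubalg {σ : Sig} (A : Alg σ) (s : Set A.carrier) : Prop :=
  ∀ o : σ.ops, ∀ x : Fin (σ.ar o) → A.carrier, (∀ i, x i ∈ s) → A.interp o x ∈ s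

/-- The algebra structure on a subalgebra. -/
def subAlg {σ : Sig} (A : Alg σ) (s : Set A.carrier) (hs : IsSubalg A s) : Alg σ where
  carrier := s
  interp o x := ⟨A.interp o fun i => (x i : A.carrier), hs o _ fun i => (x i).2⟩

def IsHom {σ : Sig} (A B : Alg σ) (h : A.carrier → B.carrier) : Prop :=
  ∀ o x, h (A.interp o x) = B.interp o fun i => h (x i)

/-- Direct power `A^I`. -/
def powAlg {σ : Sig} (A : Alg σ) (I : Type) : Alg σ where
  carrier := I → A.carrier
  interp o x i := A.interp o fun j => x j i

/-- Product of a family of algebras. -/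
def prodAlg {σ : Sig} {I : Type} (f : I → Alg σ) : Alg σ where
  carrier := ∀ i, (f i).carrier
  interp o x i := (f i).interp o fun j => x j i

/-- The subuniverse generated by a subset. -/
def genSet {σ : Sig} (A : Alg σ) (g : Set A.carrier) : Set A.carrier :=
  ⋂₀ {s | IsSubalg A s ∧ g ⊆ s}

lemma genSet_isSubalg {σ : Sig} (A : Alg σ) (g : Set A.carrier) :
    IsSubalg A (genSet A g) := by
  intro o x hx
  rw [genSet, Set.mem_sInter]
  intro s hs
  exact hs.1 o x fun i => Set.mem_sInter.mp (hx i) s hs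

/-- The subalgebra of `A` generated by finitely many elements `g 0, …, g (m-1)`. -/
def fgSub {σ : Sig} (A : Alg σ) (m : ℕ) (g : Fin m → A.carrier) : Alg σ :=
  subAlg A (genSet A (Set.range g)) (genSet_isSubalg A _)

/-- `B` is a homomorphic image of a subalgebra of a (possibly infinite) power of `A`. -/
def MemHSP {σ : Sig} (A B : Alg σ) : Prop :=
  ∃ (I : Type) (s : Set (powAlg A I).carrier) (hs : IsSubalg (powAlg A I) s)
    (h : (subAlg (powAlg A I) s hs).carrier → B.carrier),
      IsHom (subAlg (powAlg A I) s hs) B h ∧ Function.Surjective h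

/-- `B` is a homomorphic image of a subalgebra of a finite power of `A`. -/
def MemHSPfin {σ : Sig} (A B : Alg σ) : Prop :=
  ∃ (I : Type) (_ : Finite I) (s : Set (powAlg A I).carrier) (hs : IsSubalg (powAlg A I) s)
    (h : (subAlg (powAlg A I) s hs).carrier → B.carrier),
      IsHom (subAlg (powAlg A I) s hs) B h ∧ Function.Surjective h

/-- The uniformity of pointwise convergence on `X → Y`, `Y` discrete. -/
def ptUnif (X Y : Type) : UniformSpace (X → Y) :=
  @Pi.uniformSpace X (fun _ => Y) fun _ => ⊥

/-- The uniformity of pointwise convergence on `Clo_n(A)`. -/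
def cloUnif {σ : Sig} (A : Alg σ) (n : ℕ) : UniformSpace ↥(CloSet A n) :=
  (ptUnif (Fin n → A.carrier) A.carrier).comap Subtype.val

/-- `φ` is the natural clone homomorphism from `Clo(A)` to `Clo(B)`:
it sends the evaluation of each term in `A` to its evaluation in `B`
(in each arity `n ≥ 1`). -/
def IsNatHom {σ : Sig} (A B : Alg σ)
    (φ : ∀ n : ℕ, ↥(CloSet A (n + 1)) → ↥(CloSet B (n + 1))) : Prop :=
  ∀ (n : ℕ) (t : Tm σ (n + 1)), (φ n ⟨evalTm A t, ⟨t, rfl⟩⟩ : _).val = evalTm B t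

/-- Uniform continuity of a clone map, with respect to the uniformities of
pointwise convergence (equivalently, uniform continuity on the coproduct). -/
def NatUC {σ : Sig} (A B : Alg σ)
    (φ : ∀ n : ℕ, ↥(CloSet A (n + 1)) → ↥(CloSet B (n + 1))) : Prop :=
  ∀ n : ℕ, @UniformContinuous _ _ (cloUnif A (n + 1)) (cloUnif B (n + 1)) (φ n)

/-! Pad the generators `g` of `C ≤ B` with an element of `C` to an `(m+1)`-tuple `b`, since the clone
map only acts in positive arities. Uniform continuity of `φ` at arity `m+1` gives a finite
`F ⊆ Aᵐ⁺¹` such that two terms whose term operations agree on `F` take the same value at `b`.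
For the diagonal tuples `d_j(a) = a_j` of `A^F` we have `t(d)(a) = t^A(a)`, so every identity
`t₁(d) = t₂(d)` yields `t₁(b) = t₂(b)`, and `t(d) ↦ t(b)` is a well-defined homomorphism from the
subalgebra generated by `d` onto `C`. -/

open Filter

section Generated

variable {σ : Sig} (A : Alg σ)

lemma subset_genSet (g : Set A.carrier) : g ⊆ genSet A g :=
  fun _ hx => Set.mem_sInter.mpr fun _ hs => hs.2 hx

lemma genSet_subset {g s : Set A.carrier} (hs : IsSubalg A s) (hg : g ⊆ s) : genSet A g ⊆ s :=
  fun _ hx => Set.mem_sInter.mp hx s ⟨hs, hg⟩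

lemma evalTm_mem_genSet {n : ℕ} (g : Fin n → A.carrier) (t : Tm σ n) :
    evalTm A t g ∈ genSet A (Set.range g) := by
  induction t with
  | var i => exact subset_genSet A _ ⟨i, rfl⟩
  | app o ts ih => exact genSet_isSubalg A _ o _ ih

lemma mem_genSet_range_iff {n : ℕ} (g : Fin n → A.carrier) (b : A.carrier) :
    b ∈ genSet A (Set.range g) ↔ ∃ t : Tm σ n, evalTm A t g = b := by
  refine ⟨fun hb => genSet_subset A (s := Set.range fun t => evalTm A t g) ?_ ?_ hb, ?_⟩
  · intro o x hx
    choose ts hts using hx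
    exact ⟨.app o ts, congrArg (A.interp o) (funext hts)⟩
  · rintro _ ⟨i, rfl⟩
    exact ⟨.var i, rfl⟩
  · rintro ⟨t, rfl⟩
    exact evalTm_mem_genSet A g t

lemma genSet_range_snoc {m : ℕ} (g : Fin m → A.carrier) {b : A.carrier}
    (hb : b ∈ genSet A (Set.range g)) :
    genSet A (Set.range (Fin.snoc g b : Fin (m + 1) → A.carrier)) = genSet A (Set.range g) := by
  refine (genSet_subset A (genSet_isSubalg A _) ?_).antisymm
    (genSet_subset A (genSet_isSubalg A _) ?_)
  · rintro _ ⟨i, rfl⟩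
    induction i using Fin.lastCases with
    | last => simpa using hb
    | cast j => simpa using subset_genSet A (Set.range g) ⟨j, rfl⟩
  · rintro _ ⟨i, rfl⟩
    exact subset_genSet A _ ⟨i.castSucc, by simp⟩

lemma isSubalg_empty_iff : IsSubalg A ∅ ↔ ∀ o : σ.ops, 0 < σ.ar o := by
  refine ⟨fun h o => Nat.pos_of_ne_zero fun h0 => ?_, fun h o x hx => hx ⟨0, h o⟩⟩
  exact h o (fun i => (i.cast h0).elim0) fun i => (i.cast h0).elim0

end Generated

lemma evalTm_powAlg {σ : Sig} (A : Alg σ) (I : Type) {n : ℕ} (t : Tm σ n)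
    (x : Fin n → (powAlg A I).carrier) (i : I) :
    evalTm (powAlg A I) t x i = evalTm A t (fun j => x j i) := by
  induction t with
  | var j => rfl
  | app o ts ih => exact congrArg (A.interp o) (funext ih)

lemma ptUnif_hasBasis (X Y : Type) :
    (@uniformity _ (ptUnif X Y)).HasBasis Set.Finite
      fun F => {p | ∀ x ∈ F, p.1 x = p.2 x} := by
  have h : @uniformity _ (ptUnif X Y) = ⨅ x : X, 𝓟 {p : (X → Y) × (X → Y) | p.1 x = p.2 x} := by
    rw [ptUnif, Pi.uniformity]
    simp only [bot_uniformity, comap_principal]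
    rfl
  rw [h]
  convert hasBasis_iInf_principal_finite _ using 1
  ext F
  simp

lemma exists_finite_eq_of_uniformContinuous {X Y X' Y' : Type} {S : Set (X → Y)}
    {T : Set (X' → Y')} (f : S → T)
    (hf : @UniformContinuous _ _ ((ptUnif X Y).comap Subtype.val)
      ((ptUnif X' Y').comap Subtype.val) f) (x' : X') :
    ∃ F : Set X, F.Finite ∧ ∀ u v : S, (∀ x ∈ F, u.1 x = v.1 x) → (f u).1 x' = (f v).1 x' := by
  have hS := (ptUnif_hasBasis X Y).comap (Prod.map ((↑) : S → X → Y) ((↑) : S → X → Y))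
  have hT := (ptUnif_hasBasis X' Y').comap (Prod.map ((↑) : T → X' → Y') ((↑) : T → X' → Y'))
  obtain ⟨F, hF, hFx⟩ := (hS.tendsto_iff hT).mp hf {x'} (Set.finite_singleton x')
  exact ⟨F, hF, fun u v huv => hFx (u, v) huv x' rfl⟩

lemma exists_finite_evalTm_congr {σ : Sig} {A B : Alg σ}
    {φ : ∀ n : ℕ, ↥(CloSet A (n + 1)) → ↥(CloSet B (n + 1))}
    (hφ : IsNatHom A B φ) (hUC : NatUC A B φ) {m : ℕ} (b : Fin (m + 1) → B.carrier) :
    ∃ F : Set (Fin (m + 1) → A.carrier), F.Finite ∧ ∀ t₁ t₂ : Tm σ (m + 1),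
      (∀ a ∈ F, evalTm A t₁ a = evalTm A t₂ a) → evalTm B t₁ b = evalTm B t₂ b := by
  obtain ⟨F, hF, hFb⟩ := exists_finite_eq_of_uniformContinuous (φ m) (hUC m) b
  refine ⟨F, hF, fun t₁ t₂ ht => ?_⟩
  have := hFb ⟨_, t₁, rfl⟩ ⟨_, t₂, rfl⟩ ht
  rwa [hφ, hφ] at this

lemma exists_surjective_isHom_of_evalTm_congr {σ : Sig} {P B : Alg σ} {n : ℕ}
    (d : Fin n → P.carrier) (b : Fin n → B.carrier)
    (hdb : ∀ t₁ t₂ : Tm σ n, evalTm P t₁ d = evalTm P t₂ d → evalTm B t₁ b = evalTm B t₂ b)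
    {s : Set B.carrier} (hs : IsSubalg B s) (hsb : s = genSet B (Set.range b)) :
    ∃ h : (subAlg P _ (genSet_isSubalg P (Set.range d))).carrier → (subAlg B s hs).carrier,
      IsHom _ _ h ∧ Function.Surjective h := by
  subst hsb
  choose T hT using fun x : genSet P (Set.range d) => (mem_genSet_range_iff P d x).mp x.2
  refine ⟨fun x => ⟨evalTm B (T x) b, evalTm_mem_genSet B b (T x)⟩, fun o x => ?_, ?_⟩
  · refine Subtype.ext (hdb _ (.app o fun i => T (x i)) ((hT _).trans ?_))
    exact congrArg (P.interp o) (funext fun i => (hT (x i)).symm)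
  · rintro ⟨c, hc⟩
    obtain ⟨t, rfl⟩ := (mem_genSet_range_iff B b c).mp hc
    exact ⟨⟨_, evalTm_mem_genSet P d t⟩, Subtype.ext (hdb _ _ (hT _))⟩

lemma memHSPfin_of_isEmpty {σ : Sig} (A C : Alg σ) [IsEmpty C.carrier]
    (hpos : ∀ o : σ.ops, 0 < σ.ar o) : MemHSPfin A C :=
  ⟨Empty, inferInstance, ∅, (isSubalg_empty_iff _).mpr hpos, fun x => x.2.elim,
    fun o x => (x ⟨0, hpos o⟩).2.elim, isEmptyElim⟩

theorem stmt_9_general {σ : Sig} (A B : Alg σ)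
    (φ : ∀ n : ℕ, ↥(CloSet A (n + 1)) → ↥(CloSet B (n + 1)))
    (hφ : IsNatHom A B φ) (hUC : NatUC A B φ) :
    ∀ (m : ℕ) (g : Fin m → B.carrier), MemHSPfin A (fgSub B m g) := by
  intro m g
  rcases (genSet B (Set.range g)).eq_empty_or_nonempty with hempty | ⟨b₀, hb₀⟩
  · have : IsEmpty (fgSub B m g).carrier := by
      simp only [fgSub, subAlg, hempty]; infer_instance
    have hpos := (isSubalg_empty_iff B).mp (hempty ▸ genSet_isSubalg B (Set.range g))
    exact memHSPfin_of_isEmpty A _ hpos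
  set b : Fin (m + 1) → B.carrier := Fin.snoc g b₀
  obtain ⟨F, hF, hFb⟩ := exists_finite_evalTm_congr hφ hUC b
  have hFfin : Finite F := hF.to_subtype
  let d : Fin (m + 1) → (powAlg A F).carrier := fun j a => a.1 j
  have hdb : ∀ t₁ t₂ : Tm σ (m + 1), evalTm (powAlg A F) t₁ d = evalTm (powAlg A F) t₂ d →
      evalTm B t₁ b = evalTm B t₂ b := fun t₁ t₂ h =>
    hFb t₁ t₂ fun a ha => by simpa [evalTm_powAlg] using congrFun h ⟨a, ha⟩
  obtain ⟨h, hhom, hsurj⟩ := exists_surjective_isHom_of_evalTm_congr d b hdb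
    (genSet_isSubalg B (Set.range g)) (genSet_range_snoc B g hb₀).symm
  exact ⟨F, hFfin, _, _, h, hhom, hsurj⟩

/-- If `B ∈ HSP(A)` and the natural clone homomorphism from `Clo(A)` onto
`Clo(B)` is uniformly continuous, then every finitely generated subalgebra of
`B` is a homomorphic image of a subalgebra of a finite power of `A`. -/
theorem stmt_9 {σ : Sig} (A B : Alg σ) (hB : MemHSP A B)
    (φ : ∀ n : ℕ, ↥(CloSet A (n + 1)) → ↥(CloSet B (n + 1)))
    (hφ : IsNatHom A B φ) (hUC : NatUC A B φ) :
    ∀ (m : ℕ) (g : Fin m → B.carrier), MemHSPfin A (fgSub B m g) :=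
  stmt_9_general A B φ hφ hUC
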